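/- arXiv:0909.3184 — 2 statements merged into one kernel-verified Lean document; each statement's English description precedes it below -/
import Mathlib

section
/- For a fixed nonnegative integer m and fixed real z > 0, as n → ∞ one has B_n^{-m}(z) = (n!/(n+m)!) · (z+m)^{n+m} · (1 + O(((z+m−1)/(z+m))^{n+m})); in particular B_n^{-m}(z) · (n+m)!/(n! · (z+m)^{n+m}) → 1. -/
/-!
After dividing by `(n!/(n+m)!) (z+m)^(n+m)`, the term `r = m` of the alternating sum becomes `1`
and each remaining term is a fixed multiple of `((z+r)/(z+m))^(n+m)`, where
`0 < (z+r)/(z+m) ≤ (z+m-1)/(z+m) < 1` for `r < m`.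
-/

open Finset Filter Asymptotics Topology

section PowerSums

variable {ι 𝕜 : Type*} [NormedField 𝕜] (s : Finset ι) (c q : ι → 𝕜)

theorem isBigO_sum_mul_pow {ρ : ℝ} (hq : ∀ i ∈ s, ‖q i‖ ≤ ρ) (l : Filter ℕ) :
    (fun k => ∑ i ∈ s, c i * q i ^ k) =O[l] fun k => ρ ^ k := by
  refine IsBigO.fun_sum fun i hi => IsBigO.const_mul_left ?_ (c i)
  have hρ : 0 ≤ ρ := (norm_nonneg _).trans (hq i hi)
  refine isBigO_of_le l fun k => ?_
  rw [norm_pow, Real.norm_of_nonneg (pow_nonneg hρ k)]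
  exact pow_le_pow_left₀ (norm_nonneg _) (hq i hi) k

theorem tendsto_sum_mul_pow_atTop_nhds_zero (hq : ∀ i ∈ s, ‖q i‖ < 1) :
    Tendsto (fun k => ∑ i ∈ s, c i * q i ^ k) atTop (𝓝 0) := by
  rw [← sum_const_zero (s := s)]
  refine tendsto_finsetSum s fun i hi => ?_
  simpa using (tendsto_pow_atTop_nhds_zero_of_norm_lt_one (hq i hi)).const_mul (c i)

end PowerSums

theorem alternating_sum_div_pow_sub_one (m k : ℕ) (z : ℝ) (hzm : z + m ≠ 0) :
    (∑ r ∈ range (m + 1), (-1) ^ (m - r) * (m.choose r : ℝ) * (z + r) ^ k) / (z + m) ^ k - 1 =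
      ∑ r ∈ range m, (-1) ^ (m - r) * (m.choose r : ℝ) * ((z + r) / (z + m)) ^ k := by
  rw [sum_range_succ, add_div, sum_div, Nat.sub_self, Nat.choose_self, pow_zero, Nat.cast_one,
    one_mul, one_mul, div_self (pow_ne_zero _ hzm), add_sub_cancel_right]
  simp only [div_pow, mul_div_assoc]

/-- For fixed `m ≥ 0` and fixed real `z > 0`, as `n → ∞`,
`B_n^{-m}(z) = (n!/(n+m)!) (z+m)^{n+m} (1 + O(((z+m-1)/(z+m))^{n+m}))`;
in particular `B_n^{-m}(z) (n+m)!/(n! (z+m)^{n+m}) → 1`. -/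
theorem stmt2 (m : ℕ) (z : ℝ) (hz : 0 < z) (B : ℕ → ℝ)
    (hB : ∀ n : ℕ, B n = (Nat.factorial n : ℝ) / (Nat.factorial (n + m) : ℝ) *
      ∑ r ∈ range (m + 1), (-1) ^ (m - r) * (Nat.choose m r : ℝ) * (z + r) ^ (n + m)) :
    ((fun n : ℕ => B n * (Nat.factorial (n + m) : ℝ) /
        ((Nat.factorial n : ℝ) * (z + m) ^ (n + m)) - 1)
      =O[atTop] fun n : ℕ => ((z + m - 1) / (z + m)) ^ (n + m)) ∧
    Tendsto (fun n : ℕ => B n * (Nat.factorial (n + m) : ℝ) /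
        ((Nat.factorial n : ℝ) * (z + m) ^ (n + m)))
      atTop (nhds 1) := by
  have hzm : 0 < z + m := by positivity
  set E : ℕ → ℝ := fun k =>
    ∑ r ∈ range m, (-1) ^ (m - r) * (m.choose r : ℝ) * ((z + r) / (z + m)) ^ k
  have hE : (fun n : ℕ => B n * (Nat.factorial (n + m) : ℝ) /
      ((Nat.factorial n : ℝ) * (z + m) ^ (n + m)) - 1) = fun n => E (n + m) := by
    funext n
    simp only [E]
    rw [← alternating_sum_div_pow_sub_one m (n + m) z hzm.ne', hB]
    have := Nat.factorial_ne_zero n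
    have := Nat.factorial_ne_zero (n + m)
    field_simp
  have hratio : ∀ r ∈ range m, ‖(z + r) / (z + m)‖ ≤ (z + m - 1) / (z + m) := fun r hr => by
    have : (r : ℝ) + 1 ≤ m := by exact_mod_cast mem_range.mp hr
    rw [Real.norm_of_nonneg (by positivity)]
    gcongr
    linarith
  have hρ : (z + m - 1) / (z + m) < 1 := (div_lt_one hzm).mpr (by linarith)
  have hbig : E =O[atTop] fun k => ((z + m - 1) / (z + m)) ^ k :=
    isBigO_sum_mul_pow _ _ _ hratio _
  have hlim : Tendsto E atTop (𝓝 0) :=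
    tendsto_sum_mul_pow_atTop_nhds_zero _ _ _ fun r hr => (hratio r hr).trans_lt hρ
  have hshift := tendsto_add_atTop_nat m
  refine ⟨hE ▸ hbig.comp_tendsto hshift, ?_⟩
  rw [← tendsto_sub_nhds_zero_iff, hE]
  exact hlim.comp hshift
end

section
/- For a fixed complex number z, as n → ∞ the Euler polynomial satisfies E_n(z) = (4·n!/π^{n+1}) · [sin(πz − πn/2) + O(3^{−n})]. -/
/-!
The generating function `g(w) = 2 e^{wz} / (e^w + 1)` is meromorphic with simple poles at the
points `w_m = mπi`, `m` odd, where its residue is `-2 e^{w_m z}`. Subtracting the principal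
parts at the four poles `±πi, ±3πi` leaves a function holomorphic on the disc `|w| ≤ 4π`, whose
Taylor coefficients at `0` are therefore `O((3π)^{-n})`. Expanding each principal part in a
geometric series, `E_n(z)/n!` is the sum of `2 e^{w_m z} / w_m^{n+1}` over these poles up to
that error; the poles `±πi` contribute exactly `(4/π^{n+1}) sin(πz - πn/2)`, and the poles
`±3πi` are themselves `O((3π)^{-n})`.
-/

open scoped Real
open Complex Filter Topology

section Removable

variable {𝕜 : Type*} [NontriviallyNormedField 𝕜]

theorem AnalyticAt.exists_eventuallyEq_div_sub_principalPart {f h : 𝕜 → 𝕜} {w₀ : 𝕜}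
    (hf : AnalyticAt 𝕜 f w₀) (hh : AnalyticAt 𝕜 h w₀) (h₀ : h w₀ = 0) (h' : deriv h w₀ ≠ 0) :
    ∃ φ, AnalyticAt 𝕜 φ w₀ ∧
      (fun w => f w / h w - f w₀ / deriv h w₀ / (w - w₀)) =ᶠ[𝓝[≠] w₀] φ := by
  set u := dslope h w₀
  have hu : AnalyticAt 𝕜 u w₀ := by
    obtain ⟨p, hp⟩ := hh
    exact hp.has_fpower_series_dslope_fslope.analyticAt
  have hu₀ : u w₀ = deriv h w₀ := dslope_same h w₀
  set c := f w₀ / deriv h w₀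
  -- `f / h - c / (w - w₀) = (f - c u) / ((w - w₀) u)`, and `f - c u` vanishes at `w₀`.
  have hN : AnalyticAt 𝕜 (fun x => f x - c * u x) w₀ := hf.sub (analyticAt_const.mul hu)
  refine ⟨fun w => dslope (fun x => f x - c * u x) w₀ w / u w, ?_, ?_⟩
  · obtain ⟨p, hp⟩ := hN
    exact hp.has_fpower_series_dslope_fslope.analyticAt.div hu (hu₀ ▸ h')
  · have hne : ∀ᶠ w in 𝓝[≠] w₀, u w ≠ 0 :=
      nhdsWithin_le_nhds (hu.continuousAt.eventually_ne (hu₀ ▸ h'))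
    filter_upwards [hne, self_mem_nhdsWithin] with w hw hww
    have hhw : h w = (w - w₀) * u w := by
      simpa [h₀] using (sub_smul_dslope h w₀ w).symm
    rw [dslope_of_ne _ hww, slope_def_field, hhw, hu₀]
    simp only [c]
    field_simp
    ring

variable {E : Type*} [NormedAddCommGroup E] [NormedSpace 𝕜 E] {f : 𝕜 → E} {U : Set 𝕜}

theorem meromorphicOn_of_forall_eventuallyEq_analyticAt
    (h : ∀ x ∈ U, ∃ φ, AnalyticAt 𝕜 φ x ∧ f =ᶠ[𝓝[≠] x] φ) : MeromorphicOn f U := fun x hx => by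
  obtain ⟨φ, hφ, hfφ⟩ := h x hx
  exact hφ.meromorphicAt.congr hfφ.symm

theorem toMeromorphicNFOn_eventuallyEq_of_eventuallyEq_nhdsNE {φ : 𝕜 → E} {x : 𝕜}
    (hf : MeromorphicOn f U) (hx : x ∈ U) (hφ : AnalyticAt 𝕜 φ x) (hfφ : f =ᶠ[𝓝[≠] x] φ) :
    toMeromorphicNFOn f U =ᶠ[𝓝 x] φ := by
  refine (toMeromorphicNFOn_eq_toMeromorphicNFAt_on_nhds hf hx).trans ?_
  rw [← toMeromorphicNFAt_eq_self.mpr hφ.meromorphicNFAt]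
  exact toMeromorphicNFAt_eventuallyEq_nhds_congr hfφ

theorem analyticOnNhd_toMeromorphicNFOn_of_forall_eventuallyEq_analyticAt
    (h : ∀ x ∈ U, ∃ φ, AnalyticAt 𝕜 φ x ∧ f =ᶠ[𝓝[≠] x] φ) :
    AnalyticOnNhd 𝕜 (toMeromorphicNFOn f U) U := fun x hx => by
  obtain ⟨φ, hφ, hfφ⟩ := h x hx
  exact hφ.congr (toMeromorphicNFOn_eventuallyEq_of_eventuallyEq_nhdsNE
    (meromorphicOn_of_forall_eventuallyEq_analyticAt h) hx hφ hfφ).symm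

end Removable

theorem hasSum_pow_div_pow_succ {K : Type*} [NormedField K] [CompleteSpace K] {c w : K}
    (hw : ‖w‖ < ‖c‖) :
    HasSum (fun n => w ^ n / c ^ (n + 1)) (c - w)⁻¹ := by
  have hc : c ≠ 0 := norm_pos_iff.mp ((norm_nonneg w).trans_lt hw)
  have hq : ‖w / c‖ < 1 := by rwa [norm_div, div_lt_one (norm_pos_iff.mpr hc)]
  have hterm : (fun n => w ^ n / c ^ (n + 1)) = fun n => c⁻¹ * (w / c) ^ n := by
    ext n; rw [div_pow, pow_succ]; field_simp
  have hsum : (c - w)⁻¹ = c⁻¹ * (1 - w / c)⁻¹ := by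
    rw [← mul_inv, mul_sub, mul_one, mul_div_cancel₀ _ hc]
  rw [hterm, hsum]
  exact (hasSum_geometric_of_norm_lt_one hq).mul_left c⁻¹

theorem hasSum_of_eq_tsum_of_ne_zero {α β : Type*} [AddCommMonoid α] [TopologicalSpace α]
    {f : β → α} {a : α} (h : a = ∑' n, f n) (ha : a ≠ 0) : HasSum f a := by
  have hf : Summable f := by
    by_contra hf
    exact ha (h.trans (tsum_eq_zero_of_not_summable hf))
  exact h ▸ hf.hasSum

theorem Odd.one_le_abs_cast {m : ℤ} (hm : Odd m) : (1 : ℝ) ≤ |m| := by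
  exact_mod_cast Int.one_le_abs (by rintro rfl; simp at hm)

noncomputable section

def eulerGenFun (z w : ℂ) : ℂ := 2 * exp (w * z) / (exp w + 1)

def eulerPole (m : ℤ) : ℂ := m * π * I

def eulerPrincipalPart (z : ℂ) (m : ℤ) (w : ℂ) : ℂ :=
  2 * exp (eulerPole m * z) / (eulerPole m - w)

def eulerPoleCoeff (z : ℂ) (m : ℤ) (n : ℕ) : ℂ := 2 * exp (eulerPole m * z) / eulerPole m ^ (n + 1)

end

theorem norm_eulerPole (m : ℤ) : ‖eulerPole m‖ = |m| * π := by
  simp [eulerPole, abs_of_pos Real.pi_pos]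

theorem eulerPole_injective : Function.Injective eulerPole := by
  intro a b h
  simpa [eulerPole, Real.pi_ne_zero, I_ne_zero] using h

theorem exp_eulerPole {m : ℤ} (hm : Odd m) : exp (eulerPole m) = -1 := by
  rw [eulerPole, mul_assoc, exp_int_mul, exp_pi_mul_I, hm.neg_one_zpow]

theorem exists_odd_eq_eulerPole {w : ℂ} (h : exp w + 1 = 0) :
    ∃ m : ℤ, Odd m ∧ w = eulerPole m := by
  have h1 : exp (w - π * I) = 1 := by
    rw [exp_sub, exp_pi_mul_I, eq_neg_of_add_eq_zero_left h, neg_div_neg_eq, div_one]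
  obtain ⟨k, hk⟩ := exp_eq_one_iff.mp h1
  exact ⟨2 * k + 1, odd_two_mul_add_one k, by rw [eulerPole]; push_cast; linear_combination hk⟩

theorem exp_add_one_ne_zero_of_norm_lt {w : ℂ} (hw : ‖w‖ < π) : exp w + 1 ≠ 0 := by
  intro h
  obtain ⟨m, hm, rfl⟩ := exists_odd_eq_eulerPole h
  rw [norm_eulerPole] at hw
  nlinarith [hm.one_le_abs_cast, Real.pi_pos]

theorem eulerGenFun_ne_zero (z : ℂ) {w : ℂ} (hw : exp w + 1 ≠ 0) : eulerGenFun z w ≠ 0 :=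
  div_ne_zero (mul_ne_zero two_ne_zero (exp_ne_zero _)) hw

theorem eulerGenFun_analyticAt (z : ℂ) {w : ℂ} (h : exp w + 1 ≠ 0) :
    AnalyticAt ℂ (eulerGenFun z) w :=
  (analyticAt_const.mul (analyticAt_cexp.comp (analyticAt_id.mul analyticAt_const))).div
    (analyticAt_cexp.add analyticAt_const) h

theorem eulerPrincipalPart_analyticAt (z : ℂ) {m : ℤ} {w : ℂ} (h : w ≠ eulerPole m) :
    AnalyticAt ℂ (eulerPrincipalPart z m) w :=
  analyticAt_const.div (analyticAt_const.sub analyticAt_id) (sub_ne_zero.mpr h.symm)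

theorem hasSum_eulerPrincipalPart (z : ℂ) {m : ℤ} {w : ℂ} (hw : ‖w‖ < |m| * π) :
    HasSum (fun n => eulerPoleCoeff z m n * w ^ n) (eulerPrincipalPart z m w) := by
  rw [← norm_eulerPole] at hw
  have hterm : (fun n => eulerPoleCoeff z m n * w ^ n)
      = fun n => 2 * exp (eulerPole m * z) * (w ^ n / eulerPole m ^ (n + 1)) := by
    ext n; rw [eulerPoleCoeff]; ring
  rw [hterm, eulerPrincipalPart, div_eq_mul_inv]
  exact (hasSum_pow_div_pow_succ hw).mul_left _

theorem exists_eventuallyEq_eulerGenFun_sub_principalPart (z : ℂ) {m : ℤ} (hm : Odd m) :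
    ∃ φ, AnalyticAt ℂ φ (eulerPole m) ∧
      (fun w => eulerGenFun z w - eulerPrincipalPart z m w) =ᶠ[𝓝[≠] eulerPole m] φ := by
  have hderiv : deriv (fun w => exp w + 1) (eulerPole m) = -1 := by
    simp [exp_eulerPole hm]
  obtain ⟨φ, hφ, hEq⟩ := AnalyticAt.exists_eventuallyEq_div_sub_principalPart
    (f := fun w => 2 * exp (w * z)) (h := fun w => exp w + 1) (w₀ := eulerPole m)
    (analyticAt_const.mul (analyticAt_cexp.comp (analyticAt_id.mul analyticAt_const)))
    (analyticAt_cexp.add analyticAt_const) (by simp [exp_eulerPole hm])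
    (by rw [hderiv]; exact neg_ne_zero.mpr one_ne_zero)
  refine ⟨φ, hφ, EventuallyEq.trans (Eventually.of_forall fun w => ?_) hEq⟩
  simp only [hderiv, eulerGenFun, eulerPrincipalPart]
  rw [← neg_sub w (eulerPole m), div_neg, div_neg, div_one]
  ring

theorem analyticAt_eulerGenFun_sub_sum (z : ℂ) {S : Finset ℤ} (hS : ∀ m ∈ S, Odd m) {w : ℂ}
    (hw : exp w + 1 ≠ 0) :
    AnalyticAt ℂ (fun x => eulerGenFun z x - ∑ m ∈ S, eulerPrincipalPart z m x) w := by
  refine (eulerGenFun_analyticAt z hw).sub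
    (Finset.analyticAt_fun_sum _ fun m hm => eulerPrincipalPart_analyticAt z ?_)
  rintro rfl
  exact hw (by rw [exp_eulerPole (hS m hm)]; norm_num)

theorem exists_eventuallyEq_eulerGenFun_sub_sum (z : ℂ) {S : Finset ℤ} (hS : ∀ m ∈ S, Odd m)
    {w : ℂ} (hw : ∀ m, Odd m → w = eulerPole m → m ∈ S) :
    ∃ φ, AnalyticAt ℂ φ w ∧
      (fun x => eulerGenFun z x - ∑ m ∈ S, eulerPrincipalPart z m x) =ᶠ[𝓝[≠] w] φ := by
  by_cases hpole : exp w + 1 = 0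
  · obtain ⟨m, hm, rfl⟩ := exists_odd_eq_eulerPole hpole
    obtain ⟨φ, hφ, hEq⟩ := exists_eventuallyEq_eulerGenFun_sub_principalPart z hm
    have hrest : AnalyticAt ℂ (∑ k ∈ S.erase m, eulerPrincipalPart z k) (eulerPole m) :=
      Finset.analyticAt_sum _ fun k hk => eulerPrincipalPart_analyticAt z
        fun h => Finset.ne_of_mem_erase hk (eulerPole_injective h).symm
    refine ⟨φ - ∑ k ∈ S.erase m, eulerPrincipalPart z k, hφ.sub hrest, ?_⟩
    filter_upwards [hEq] with x hx
    rw [← Finset.add_sum_erase S _ (hw m hm rfl), ← sub_sub, hx]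
    simp
  · exact ⟨_, analyticAt_eulerGenFun_sub_sum z hS hpole, EventuallyEq.rfl⟩

theorem hasFPowerSeriesAt_eulerGenFun_sub_sum (z : ℂ) {a : ℕ → ℂ}
    (ha : ∀ w : ℂ, ‖w‖ < π → HasSum (fun n => a n * w ^ n) (eulerGenFun z w))
    {S : Finset ℤ} (hS : ∀ m ∈ S, Odd m) :
    HasFPowerSeriesAt (fun x => eulerGenFun z x - ∑ m ∈ S, eulerPrincipalPart z m x)
      (FormalMultilinearSeries.ofScalars ℂ fun n => a n - ∑ m ∈ S, eulerPoleCoeff z m n) 0 := by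
  rw [hasFPowerSeriesAt_iff]
  filter_upwards [Metric.ball_mem_nhds 0 Real.pi_pos] with w hw
  rw [mem_ball_zero_iff] at hw
  have hpp : ∀ m ∈ S, HasSum (fun n => eulerPoleCoeff z m n * w ^ n) (eulerPrincipalPart z m w) :=
    fun m hm => hasSum_eulerPrincipalPart z
      (hw.trans_le (le_mul_of_one_le_left Real.pi_pos.le (hS m hm).one_le_abs_cast))
  simp only [FormalMultilinearSeries.coeff_ofScalars, smul_eq_mul, zero_add, mul_sub,
    Finset.mul_sum]
  simp only [mul_comm (w ^ _)]
  exact (ha w hw).sub (hasSum_sum hpp)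

theorem exists_bound_coeff_sub_sum_eulerPoleCoeff (z : ℂ) {a : ℕ → ℂ}
    (ha : ∀ w : ℂ, ‖w‖ < π → HasSum (fun n => a n * w ^ n) (eulerGenFun z w))
    {S : Finset ℤ} (hS : ∀ m ∈ S, Odd m) {r R : ℝ} (hr : 0 ≤ r) (hrR : r < R)
    (hSR : ∀ m : ℤ, Odd m → |m| * π ≤ R → m ∈ S) :
    ∃ C, ∀ n, ‖a n - ∑ m ∈ S, eulerPoleCoeff z m n‖ * r ^ n ≤ C := by
  set f := fun x => eulerGenFun z x - ∑ m ∈ S, eulerPrincipalPart z m x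
  set U := Metric.closedBall (0 : ℂ) R
  have hrem : ∀ w ∈ U, ∃ φ, AnalyticAt ℂ φ w ∧ f =ᶠ[𝓝[≠] w] φ := fun w hw =>
    exists_eventuallyEq_eulerGenFun_sub_sum z hS fun m hm hwm =>
      hSR m hm (by simpa [U, hwm, norm_eulerPole] using hw)
  -- `F` is `f` with its removable singularities in `U` filled in.
  set F := toMeromorphicNFOn f U
  have hF : DifferentiableOn ℂ F U :=
    (analyticOnNhd_toMeromorphicNFOn_of_forall_eventuallyEq_analyticAt hrem).differentiableOn
  have hU : (0 : ℂ) ∈ U := by simpa [U] using hr.trans hrR.le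
  have hFf : F =ᶠ[𝓝 0] f := toMeromorphicNFOn_eventuallyEq_of_eventuallyEq_nhdsNE
    (meromorphicOn_of_forall_eventuallyEq_analyticAt hrem) hU
    (analyticAt_eulerGenFun_sub_sum z hS (by norm_num)) EventuallyEq.rfl
  have hR : 0 < R.toNNReal := Real.toNNReal_pos.mpr (hr.trans_lt hrR)
  have hcauchy := (hF.mono (by simp [U, hr.trans hrR.le])).hasFPowerSeriesOnBall (c := 0) hR
  have hb := (hasFPowerSeriesAt_eulerGenFun_sub_sum z ha hS).congr hFf.symm
  have hrad : (r.toNNReal : ENNReal) < (FormalMultilinearSeries.ofScalars ℂ fun n =>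
      a n - ∑ m ∈ S, eulerPoleCoeff z m n).radius := by
    rw [hb.eq_formalMultilinearSeries hcauchy.hasFPowerSeriesAt]
    exact lt_of_lt_of_le (by simpa [hrR] using hr.trans_lt hrR) hcauchy.r_le
  obtain ⟨C, -, hC⟩ := FormalMultilinearSeries.norm_mul_pow_le_of_lt_radius _ hrad
  exact ⟨C, fun n => by simpa [FormalMultilinearSeries.ofScalars_norm, hr] using hC n⟩

theorem pi_pow_div_four_mul_eulerPoleCoeff_one_add_neg_one (z : ℂ) (n : ℕ) :
    (π : ℂ) ^ (n + 1) / 4 * (eulerPoleCoeff z 1 n + eulerPoleCoeff z (-1) n)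
      = sin (π * z - π * n / 2) := by
  -- `(±i)^{-(n+1)} = e^{∓(n+1)πi/2}`: the two terms are the exponentials of `cos (πz - (n+1)π/2)`.
  have h1 : eulerPole 1 = π * I := by simp [eulerPole]
  have h2 : eulerPole (-1) = -(π * I) := by simp [eulerPole]
  have e1 : exp ((π * z - π * n / 2 - π / 2) * I) = exp (π * I * z) * (-I) ^ (n + 1) := by
    rw [show (π * z - π * n / 2 - π / 2) * I = π * I * z + ((n + 1 : ℕ) : ℂ) * (-π / 2 * I) by
      push_cast; ring, exp_add, exp_nat_mul, exp_neg_pi_div_two_mul_I]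
  have e2 : exp (-(π * z - π * n / 2 - π / 2) * I) = exp (-(π * I) * z) * I ^ (n + 1) := by
    rw [show -(π * z - π * n / 2 - π / 2) * I = -(π * I) * z + ((n + 1 : ℕ) : ℂ) * (π / 2 * I) by
      push_cast; ring, exp_add, exp_nat_mul, exp_pi_div_two_mul_I]
  have hI : I ^ (n + 1) * (-I) ^ (n + 1) = 1 := by rw [← mul_pow]; simp
  rw [← cos_sub_pi_div_two, cos, e1, e2, eulerPoleCoeff, eulerPoleCoeff, h1, h2, mul_pow,
    show (-(π * I) : ℂ) ^ (n + 1) = π ^ (n + 1) * (-I) ^ (n + 1) by ring]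
  set u := exp (π * I * z)
  set v := exp (-(π * I) * z)
  have hp : I ^ (n + 1) ≠ 0 := pow_ne_zero _ I_ne_zero
  have hq : (-I) ^ (n + 1) ≠ 0 := pow_ne_zero _ (neg_ne_zero.mpr I_ne_zero)
  generalize I ^ (n + 1) = p at hI hp ⊢
  generalize (-I) ^ (n + 1) = q at hI hq ⊢
  field_simp
  linear_combination -4 * (u * q + v * p) * hI

theorem norm_pi_pow_div_four_mul_le {x : ℂ} {C : ℝ} {n : ℕ} (hx : ‖x‖ * (3 * π) ^ n ≤ C) :
    ‖(π : ℂ) ^ (n + 1) / 4 * x‖ ≤ π / 4 * C * (1 / 3) ^ n := by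
  have hπ := Real.pi_pos
  calc ‖(π : ℂ) ^ (n + 1) / 4 * x‖ = π / 4 * (‖x‖ * (3 * π) ^ n) * (1 / 3) ^ n := by
        simp only [Complex.norm_mul, Complex.norm_div, norm_pow, norm_real, Real.norm_eq_abs,
          abs_of_pos hπ, norm_ofNat, mul_pow, one_div, inv_pow]
        field_simp
        ring
    _ ≤ π / 4 * C * (1 / 3) ^ n := by gcongr

theorem norm_pi_pow_div_four_mul_eulerPoleCoeff_le (z : ℂ) {m : ℤ} (hm : |m| = 3) (n : ℕ) :
    ‖(π : ℂ) ^ (n + 1) / 4 * eulerPoleCoeff z m n‖ ≤ ‖exp (eulerPole m * z)‖ / 2 * (1 / 3) ^ n := by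
  have hπ := Real.pi_pos
  calc ‖(π : ℂ) ^ (n + 1) / 4 * eulerPoleCoeff z m n‖
      = ‖exp (eulerPole m * z)‖ / 2 * (1 / 3) ^ (n + 1) := by
        simp only [eulerPoleCoeff, Complex.norm_mul, Complex.norm_div, norm_pow, norm_real,
          Real.norm_eq_abs, abs_of_pos hπ, norm_ofNat, norm_eulerPole, hm, Int.cast_ofNat, mul_pow,
          one_div, inv_pow]
        field_simp
        norm_num
    _ ≤ ‖exp (eulerPole m * z)‖ / 2 * (1 / 3) ^ n :=
        mul_le_mul_of_nonneg_left (pow_le_pow_of_le_one (by norm_num) (by norm_num) n.le_succ)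
          (by positivity)

theorem mem_of_odd_of_abs_mul_pi_le {m : ℤ} (hm : Odd m) (hmπ : |m| * π ≤ 4 * π) :
    m ∈ ({1, -1, 3, -3} : Finset ℤ) := by
  have := abs_le.mp (show |m| ≤ 4 by exact_mod_cast le_of_mul_le_mul_right hmπ Real.pi_pos)
  rw [Int.odd_iff] at hm
  simp only [Finset.mem_insert, Finset.mem_singleton]
  omega

/-- For fixed complex `z`, as `n → ∞`, the Euler polynomial (defined by
`2 e^{wz}/(e^w+1) = Σ E_n(z) w^n/n!` for `|w| < π`) satisfies
`E_n(z) = (4 n!/π^{n+1})[sin(πz - πn/2) + O(3^{-n})]`, i.e.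
`|E_n(z) π^{n+1}/(4 n!) - sin(πz - πn/2)| ≤ C 3^{-n}` for a constant `C`
depending only on `z`. -/
theorem stmt9 (z : ℂ) (E : ℕ → ℂ)
    (hE : ∀ w : ℂ, ‖w‖ < π →
      2 * Complex.exp (w * z) / (Complex.exp w + 1) =
        ∑' n : ℕ, E n / (Nat.factorial n : ℂ) * w ^ n) :
    ∃ C : ℝ, ∀ n : ℕ,
      ‖E n * (π : ℂ) ^ (n + 1) / (4 * (Nat.factorial n : ℂ)) -
        Complex.sin ((π : ℂ) * z - (π : ℂ) * n / 2)‖ ≤ C * (1 / 3) ^ n := by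
  set a : ℕ → ℂ := fun n => E n / (Nat.factorial n : ℂ)
  have ha : ∀ w : ℂ, ‖w‖ < π → HasSum (fun n => a n * w ^ n) (eulerGenFun z w) := fun w hw =>
    hasSum_of_eq_tsum_of_ne_zero (hE w hw)
      (eulerGenFun_ne_zero z (exp_add_one_ne_zero_of_norm_lt hw))
  obtain ⟨C, hC⟩ := exists_bound_coeff_sub_sum_eulerPoleCoeff z ha (S := {1, -1, 3, -3})
    (by decide) (r := 3 * π) (R := 4 * π) (by positivity) (by linarith [Real.pi_pos])
    fun _ => mem_of_odd_of_abs_mul_pi_le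
  refine ⟨π / 4 * C + (‖exp (eulerPole 3 * z)‖ + ‖exp (eulerPole (-3) * z)‖) / 2, fun n => ?_⟩
  set c : ℂ := (π : ℂ) ^ (n + 1) / 4
  have hsplit : E n * (π : ℂ) ^ (n + 1) / (4 * (Nat.factorial n : ℂ)) - sin (π * z - π * n / 2)
      = c * (a n - ∑ m ∈ {1, -1, 3, -3}, eulerPoleCoeff z m n)
        + (c * eulerPoleCoeff z 3 n + c * eulerPoleCoeff z (-3) n) := by
    rw [← pi_pow_div_four_mul_eulerPoleCoeff_one_add_neg_one, Finset.sum_insert (by decide),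
      Finset.sum_insert (by decide), Finset.sum_insert (by decide), Finset.sum_singleton]
    field_simp
    ring
  rw [hsplit]
  calc _ ≤ ‖c * (a n - ∑ m ∈ {1, -1, 3, -3}, eulerPoleCoeff z m n)‖
        + (‖c * eulerPoleCoeff z 3 n‖ + ‖c * eulerPoleCoeff z (-3) n‖) :=
        (norm_add_le _ _).trans (add_le_add le_rfl (norm_add_le _ _))
    _ ≤ π / 4 * C * (1 / 3) ^ n + (‖exp (eulerPole 3 * z)‖ / 2 * (1 / 3) ^ n
          + ‖exp (eulerPole (-3) * z)‖ / 2 * (1 / 3) ^ n) :=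
        add_le_add (norm_pi_pow_div_four_mul_le (hC n))
          (add_le_add (norm_pi_pow_div_four_mul_eulerPoleCoeff_le z (by norm_num) n)
            (norm_pi_pow_div_four_mul_eulerPoleCoeff_le z (by norm_num) n))
    _ = _ := by ring
end
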